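/- Let n = r_1 ≥ ... ≥ r_m and m = c_1 ≥ ... ≥ c_n be consistent line sums with n ≥ 2. Then there exists a finite set F₂ with these row and column sums such that L_h(F₂) ≤ 4n − 4. -/

import Mathlib

/-!
Fill the columns one at a time, as in Ryser's greedy algorithm. Row sums are antitone, so with
`v` the remaining sum of row `c`, the rows of remaining sum `> v` and those of sum `≥ v` are initial
segments `[1, a]` and `[1, e]`. A column with `c` points goes into `[1, a]` together with the last
`c - a` rows of `[a + 1, e]`: a union of two intervals, after whose removal the row sums stay
antitone. That the remaining line sums are still realisable is a `2 × 2` switching argument. So each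
column adds at most `4` to `Lh`, except the first (full, as `c 1 = m`) and the last (its rows are an
initial segment), which add at most `2`: in total `2 + 4 (n - 2) + 2 = 4 n - 4`.
-/

open Finset

/-- Number of points of `F` in row `i`. -/
def rowSum (F : Finset (ℤ × ℤ)) (i : ℤ) : ℕ := (F.filter fun p => p.1 = i).card

/-- Number of points of `F` in column `j`. -/
def colSum (F : Finset (ℤ × ℤ)) (j : ℤ) : ℕ := (F.filter fun p => p.2 = j).card

/-- Length of the horizontal boundary of `F`: the number of vertically adjacent pairs
of lattice points with exactly one of the two points in `F`. -/
def Lh (F : Finset (ℤ × ℤ)) : ℕ :=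
  ((F ∪ F.image fun p => (p.1 - 1, p.2)).filter
    fun p => decide (p ∈ F) ≠ decide ((p.1 + 1, p.2) ∈ F)).card

/-- Length of the vertical boundary of `F`: the number of horizontally adjacent pairs
of lattice points with exactly one of the two points in `F`. -/
def Lv (F : Finset (ℤ × ℤ)) : ℕ :=
  ((F ∪ F.image fun p => (p.1, p.2 - 1)).filter
    fun p => decide (p ∈ F) ≠ decide ((p.1, p.2 + 1) ∈ F)).card

lemma rowSum_union_of_disjoint {A B : Finset (ℤ × ℤ)} (h : Disjoint A B) (i : ℤ) :
    rowSum (A ∪ B) i = rowSum A i + rowSum B i := by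
  rw [rowSum, filter_union, card_union_of_disjoint (disjoint_filter_filter h)]; rfl

lemma colSum_union_of_disjoint {A B : Finset (ℤ × ℤ)} (h : Disjoint A B) (j : ℤ) :
    colSum (A ∪ B) j = colSum A j + colSum B j := by
  rw [colSum, filter_union, card_union_of_disjoint (disjoint_filter_filter h)]; rfl

lemma rowSum_product_singleton (S : Finset ℤ) (j i : ℤ) :
    rowSum (S ×ˢ {j}) i = if i ∈ S then 1 else 0 := by
  rw [rowSum, filter_product_left (· = i), card_product, card_singleton, mul_one, filter_eq']
  split_ifs <;> simp

lemma filter_snd_eq_subset {F : Finset (ℤ × ℤ)} {R C : Finset ℤ} (hF : F ⊆ R ×ˢ C) (j : ℤ) :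
    F.filter (·.2 = j) ⊆ R ×ˢ {j} := by
  intro p hp
  rw [mem_filter] at hp
  exact mem_product.2 ⟨(mem_product.1 (hF hp.1)).1, mem_singleton.2 hp.2⟩

lemma colSum_le_card {F : Finset (ℤ × ℤ)} {R C : Finset ℤ} (hF : F ⊆ R ×ˢ C) (j : ℤ) :
    colSum F j ≤ #R := by
  simpa [colSum] using card_le_card (filter_snd_eq_subset hF j)

lemma filter_snd_eq_of_colSum_eq {F : Finset (ℤ × ℤ)} {R C : Finset ℤ} (hF : F ⊆ R ×ˢ C)
    {j : ℤ} (hj : colSum F j = #R) : F.filter (·.2 = j) = R ×ˢ {j} :=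
  eq_of_subset_of_card_le (filter_snd_eq_subset hF j) (by simp [← hj, colSum])


def horizontalBoundary (F : Finset (ℤ × ℤ)) : Finset (ℤ × ℤ) :=
  (F ∪ F.image fun p => (p.1 - 1, p.2)).filter
    fun p => decide (p ∈ F) ≠ decide ((p.1 + 1, p.2) ∈ F)

lemma Lh_eq_card_horizontalBoundary (F : Finset (ℤ × ℤ)) : Lh F = #(horizontalBoundary F) :=
  rfl

lemma mem_horizontalBoundary {F : Finset (ℤ × ℤ)} {p : ℤ × ℤ} :
    p ∈ horizontalBoundary F ↔ (p ∈ F ↔ (p.1 + 1, p.2) ∉ F) := by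
  simp only [horizontalBoundary, mem_filter, mem_union, mem_image, ne_eq, decide_eq_decide]
  constructor
  · exact fun h => by tauto
  · intro h
    refine ⟨?_, by tauto⟩
    by_cases hp : p ∈ F
    · exact Or.inl hp
    · exact Or.inr ⟨_, not_not.1 (mt h.2 hp), by simp⟩

lemma Lh_union {A B : Finset (ℤ × ℤ)} (hAB : ∀ p ∈ A, ∀ q ∈ B, p.2 ≠ q.2) :
    Lh (A ∪ B) = Lh A + Lh B := by
  have key (p : ℤ × ℤ) : ¬ (p ∈ A ∧ p ∈ B) ∧ ¬ (p ∈ A ∧ (p.1 + 1, p.2) ∈ B) ∧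
      ¬ (p ∈ B ∧ (p.1 + 1, p.2) ∈ A) ∧ ¬ ((p.1 + 1, p.2) ∈ A ∧ (p.1 + 1, p.2) ∈ B) :=
    ⟨fun h => hAB _ h.1 _ h.2 rfl, fun h => hAB _ h.1 _ h.2 rfl,
      fun h => hAB _ h.2 _ h.1 rfl, fun h => hAB _ h.1 _ h.2 rfl⟩
  simp only [Lh_eq_card_horizontalBoundary]
  rw [← card_union_of_disjoint]
  · congr 1
    ext p
    simp only [mem_union, mem_horizontalBoundary]
    have := key p
    tauto
  · rw [disjoint_left]
    intro p hA hB
    rw [mem_horizontalBoundary] at hA hB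
    have := key p
    tauto

lemma Lh_column_le {S T : Finset ℤ} (j : ℤ) (hT : ∀ x, (x ∈ S ↔ x + 1 ∉ S) → x ∈ T) :
    Lh (S ×ˢ {j}) ≤ #T := by
  rw [Lh_eq_card_horizontalBoundary, ← mul_one #T, ← card_singleton j, ← card_product]
  refine card_le_card fun p hp => ?_
  rw [mem_horizontalBoundary] at hp
  have hpj : p.2 = j := by
    by_contra h
    simp only [mem_product, mem_singleton, h, and_false, false_iff, not_not] at hp
  simp only [mem_product, mem_singleton, hpj, and_true] at hp ⊢
  exact hT _ hp

lemma Lh_Icc_column_le (j a b : ℤ) : Lh (Icc a b ×ˢ {j}) ≤ 2 :=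
  (Lh_column_le (T := {a - 1, b}) j fun x hx => by
    simp only [mem_Icc, mem_insert, mem_singleton] at hx ⊢; omega).trans card_le_two

lemma Lh_Icc_union_Icc_column_le (j a b a' b' : ℤ) : Lh ((Icc a b ∪ Icc a' b') ×ˢ {j}) ≤ 4 :=
  (Lh_column_le (T := {a - 1, b, a' - 1, b'}) j fun x hx => by
    simp only [mem_union, mem_Icc, mem_insert, mem_singleton] at hx ⊢; omega).trans card_le_four

section Column

variable {F : Finset (ℤ × ℤ)} {S : Finset ℤ} {j : ℤ}

lemma filter_snd_ne_union (hF : F.filter (·.2 = j) = S ×ˢ {j}) :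
    F.filter (·.2 ≠ j) ∪ S ×ˢ {j} = F := by
  rw [← hF, union_comm, filter_union_filter_not_eq]

lemma disjoint_filter_snd_ne : Disjoint (F.filter (·.2 ≠ j)) (S ×ˢ {j}) := by
  rw [disjoint_left]
  intro p hp hp'
  exact (mem_filter.1 hp).2 (mem_singleton.1 (mem_product.1 hp').2)

lemma rowSum_filter_snd_ne_add (hF : F.filter (·.2 = j) = S ×ˢ {j}) (x : ℤ) :
    rowSum (F.filter (·.2 ≠ j)) x + (if x ∈ S then 1 else 0) = rowSum F x := by
  conv_rhs => rw [← filter_snd_ne_union hF]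
  rw [rowSum_union_of_disjoint disjoint_filter_snd_ne, rowSum_product_singleton]

lemma sums_Lh_union_column (hF : F.filter (·.2 = j) = S ×ˢ {j}) {G : Finset (ℤ × ℤ)}
    (hGj : ∀ p ∈ G, p.2 ≠ j) (hrow : ∀ x, rowSum G x = rowSum (F.filter (·.2 ≠ j)) x)
    (hcol : ∀ y, colSum G y = colSum (F.filter (·.2 ≠ j)) y) :
    (∀ x, rowSum (G ∪ S ×ˢ {j}) x = rowSum F x) ∧
      (∀ y, colSum (G ∪ S ×ˢ {j}) y = colSum F y) ∧
      Lh (G ∪ S ×ˢ {j}) = Lh G + Lh (S ×ˢ {j}) := by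
  have hG : Disjoint G (S ×ˢ {j}) := by
    rw [disjoint_left]
    exact fun p hp hp' => hGj p hp (mem_singleton.1 (mem_product.1 hp').2)
  refine ⟨fun x => ?_, fun y => ?_,
    Lh_union fun p hp q hq => (mem_singleton.1 (mem_product.1 hq).2).symm ▸ hGj p hp⟩
  · conv_rhs => rw [← filter_snd_ne_union hF]
    rw [rowSum_union_of_disjoint hG, rowSum_union_of_disjoint disjoint_filter_snd_ne, hrow]
  · conv_rhs => rw [← filter_snd_ne_union hF]
    rw [colSum_union_of_disjoint hG, colSum_union_of_disjoint disjoint_filter_snd_ne, hcol]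

end Column

lemma antitoneOn_of_add_indicator {ρ σ : ℤ → ℕ} {I : Set ℤ} {S : Finset ℤ}
    (hρ : AntitoneOn ρ I) (hσ : ∀ x, σ x + (if x ∈ S then 1 else 0) = ρ x)
    (hS : ∀ x ∈ S, ∀ y ∈ I, y ∉ S → x ≤ y → ρ y < ρ x) : AntitoneOn σ I := by
  intro x hx y hy hxy
  have hρxy := hρ hx hy hxy
  have ex := hσ x
  have ey := hσ y
  by_cases hxS : x ∈ S <;> by_cases hyS : y ∈ S <;> simp only [hxS, hyS, if_true, if_false] at ex ey
  · omega
  · have := hS x hxS y hy hyS hxy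
    omega
  · omega
  · omega

lemma filter_Icc_eq_Icc_card {m : ℤ} {p : ℤ → Prop} [DecidablePred p]
    (hp : ∀ x y, 1 ≤ x → x ≤ y → y ≤ m → p y → p x) :
    (Icc 1 m).filter p = Icc 1 (#((Icc 1 m).filter p) : ℤ) := by
  set P := (Icc 1 m).filter p
  have hsub : Icc 1 (#P : ℤ) ⊆ P := by
    intro y hy
    rw [mem_Icc] at hy
    by_contra hyP
    have hPy : P ⊆ Icc 1 (y - 1) := by
      intro x hx
      obtain ⟨hxm, hpx⟩ := mem_filter.1 hx
      rw [mem_Icc] at hxm ⊢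
      refine ⟨hxm.1, ?_⟩
      by_contra hyx
      exact hyP (mem_filter.2 ⟨mem_Icc.2 ⟨hy.1, by omega⟩, hp y x hy.1 (by omega) hxm.2 hpx⟩)
    have := card_le_card hPy
    rw [Int.card_Icc] at this
    omega
  exact (eq_of_subset_of_card_le hsub (by simp)).symm

lemma two_intervals_top_rows_of_thresholds {ρ : ℤ → ℕ} {m : ℤ} {v a c e : ℕ}
    (hP : (Icc 1 m).filter (v < ρ ·) = Icc 1 (a : ℤ))
    (hQ : (Icc 1 m).filter (v ≤ ρ ·) = Icc 1 (e : ℤ)) (hac : a < c) (hce : c ≤ e)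
    (hem : (e : ℤ) ≤ m) :
    let S := Icc 1 (a : ℤ) ∪ Icc ((e : ℤ) - (c - a) + 1) e
    S ⊆ Icc 1 m ∧ #S = c ∧ ∀ x ∈ S, ∀ y ∈ Icc 1 m, y ∉ S → ρ y ≤ ρ x ∧ (x ≤ y → ρ y < ρ x) := by
  intro S
  have hdisj : Disjoint (Icc 1 (a : ℤ)) (Icc ((e : ℤ) - (c - a) + 1) e) := by
    rw [disjoint_left]
    intro x hx hx'
    rw [mem_Icc] at hx hx'
    omega
  refine ⟨union_subset (Icc_subset_Icc le_rfl (by omega)) (Icc_subset_Icc (by omega) hem), ?_, ?_⟩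
  · rw [card_union_of_disjoint hdisj, Int.card_Icc, Int.card_Icc]
    omega
  intro x hx y hy hyS
  have hyP : ¬ v < ρ y := fun h => hyS (mem_union_left _ (hP ▸ mem_filter.2 ⟨hy, h⟩))
  rcases mem_union.1 hx with hxP | hxQ
  · rw [← hP, mem_filter] at hxP
    exact ⟨by omega, fun _ => by omega⟩
  · have hxQ' : v ≤ ρ x := by
      have : x ∈ Icc 1 (e : ℤ) := by rw [mem_Icc] at hxQ ⊢; omega
      rw [← hQ, mem_filter] at this
      exact this.2
    refine ⟨by omega, fun hxy => ?_⟩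
    have hyQ : y ∉ Icc 1 (e : ℤ) := by
      intro h
      rw [mem_Icc] at hxQ h
      exact hyS (mem_union_right _ (mem_Icc.2 ⟨by omega, h.2⟩))
    rw [← hQ, mem_filter] at hyQ
    have : ¬ v ≤ ρ y := fun h => hyQ ⟨hy, h⟩
    omega

lemma exists_two_intervals_top_rows {ρ : ℤ → ℕ} {m : ℤ} (hρ : AntitoneOn ρ (Set.Icc 1 m))
    {c : ℕ} (hcm : c ≤ #(Icc 1 m)) :
    ∃ a b b' : ℤ, Icc 1 a ∪ Icc b b' ⊆ Icc 1 m ∧ #(Icc 1 a ∪ Icc b b') = c ∧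
      ∀ x ∈ Icc 1 a ∪ Icc b b', ∀ y ∈ Icc 1 m, y ∉ Icc 1 a ∪ Icc b b' →
        ρ y ≤ ρ x ∧ (x ≤ y → ρ y < ρ x) := by
  rcases Nat.eq_zero_or_pos c with rfl | hc
  · exact ⟨0, 1, 0, by simp, by simp, by simp⟩
  rw [Int.card_Icc] at hcm
  have hcm' : (c : ℤ) ∈ Icc 1 m := mem_Icc.2 ⟨by omega, by omega⟩
  obtain ⟨v, hv⟩ : ∃ v, ρ c = v := ⟨_, rfl⟩
  have hclosed (q : ℕ → Prop) (hq : ∀ s t, s ≤ t → q s → q t) :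
      ∀ x y, 1 ≤ x → x ≤ y → y ≤ m → q (ρ y) → q (ρ x) := fun x y hx hxy hy =>
    hq _ _ (hρ ⟨hx, hxy.trans hy⟩ ⟨hx.trans hxy, hy⟩ hxy)
  have hP := filter_Icc_eq_Icc_card (hclosed (v < ·) fun s t hst h => h.trans_le hst)
  have hQ := filter_Icc_eq_Icc_card (hclosed (v ≤ ·) fun s t hst h => h.trans hst)
  have hac : #((Icc 1 m).filter (v < ρ ·)) < c := by
    by_contra h
    have : (c : ℤ) ∈ Icc 1 (#((Icc 1 m).filter (v < ρ ·)) : ℤ) := mem_Icc.2 ⟨by omega, by omega⟩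
    rw [← hP, mem_filter] at this
    exact this.2.ne' hv
  have hce : c ≤ #((Icc 1 m).filter (v ≤ ρ ·)) := by
    have : (c : ℤ) ∈ (Icc 1 m).filter (v ≤ ρ ·) := mem_filter.2 ⟨hcm', hv.ge⟩
    rw [hQ, mem_Icc] at this
    exact_mod_cast this.2
  have hem := card_le_card (filter_subset (v ≤ ρ ·) (Icc 1 m))
  rw [Int.card_Icc] at hem
  exact ⟨_, _, _, two_intervals_top_rows_of_thresholds hP hQ hac hce (by omega)⟩

lemma card_filter_insert_insert_erase_erase {α : Type*} [DecidableEq α] {F : Finset α}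
    {q : α → Prop} [DecidablePred q] {a b c d : α} (ha : a ∈ F) (hb : b ∈ F) (hc : c ∉ F)
    (hd : d ∉ F) (hab : a ≠ b) (hcd : c ≠ d) (hca : q c ↔ q a) (hdb : q d ↔ q b) :
    #((insert c (insert d ((F.erase a).erase b))).filter q) = #(F.filter q) := by
  have hd' : d ∉ (F.erase a).erase b := fun h => hd (mem_of_mem_erase (mem_of_mem_erase h))
  have hc' : c ∉ insert d ((F.erase a).erase b) := by
    rw [mem_insert, not_or]
    exact ⟨hcd, fun h => hc (mem_of_mem_erase (mem_of_mem_erase h))⟩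
  simp only [card_filter]
  rw [sum_insert hc', sum_insert hd', ← add_sum_erase _ _ ha,
    ← add_sum_erase _ _ (mem_erase.2 ⟨hab.symm, hb⟩)]
  simp only [hca, hdb]

lemma exists_switch_column {F : Finset (ℤ × ℤ)} {i i' j : ℤ} (hi : (i, j) ∉ F)
    (hi' : (i', j) ∈ F) (hle : rowSum F i' ≤ rowSum F i) :
    ∃ k, (i, k) ∈ F ∧ (i', k) ∉ F := by
  by_contra! h
  have hinj : Set.InjOn (fun p : ℤ × ℤ => (i', p.2)) (F.filter (·.1 = i)) := by
    intro p hp q hq hpq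
    rw [mem_coe, mem_filter] at hp hq
    exact Prod.ext (hp.2.trans hq.2.symm) (Prod.mk.inj hpq).2
  have hmaps : ∀ p ∈ F.filter (·.1 = i), (i', p.2) ∈ (F.filter (·.1 = i')).erase (i', j) := by
    intro p hp
    rw [mem_filter] at hp
    have hpF : (i, p.2) ∈ F := by rw [← hp.2]; exact hp.1
    refine mem_erase.2 ⟨fun hpj => hi ?_, mem_filter.2 ⟨h _ hpF, rfl⟩⟩
    rwa [← (Prod.mk.inj hpj).2]
  have := card_le_card_of_injOn _ hmaps hinj
  rw [card_erase_of_mem (s := F.filter (·.1 = i')) (mem_filter.2 ⟨hi', rfl⟩)] at this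
  have hpos : 0 < rowSum F i' := card_pos.2 ⟨_, mem_filter.2 ⟨hi', rfl⟩⟩
  simp only [rowSum] at hle hpos
  omega

lemma exists_switch {R C : Finset ℤ} {F : Finset (ℤ × ℤ)} (hF : F ⊆ R ×ˢ C) {i i' j : ℤ}
    (hiR : i ∈ R) (hjC : j ∈ C) (hi : (i, j) ∉ F) (hi' : (i', j) ∈ F)
    (hle : rowSum F i' ≤ rowSum F i) :
    ∃ G ⊆ R ×ˢ C, (∀ x, rowSum G x = rowSum F x) ∧ (∀ y, colSum G y = colSum F y) ∧
      (i, j) ∈ G ∧ ∀ x ≠ i', (x, j) ∈ F → (x, j) ∈ G := by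
  obtain ⟨k, hik, hi'k⟩ := exists_switch_column hi hi' hle
  have hkj : k ≠ j := by rintro rfl; exact hi hik
  have hii' : i ≠ i' := by rintro rfl; exact hi'k hik
  refine ⟨insert (i, j) (insert (i', k) ((F.erase (i', j)).erase (i, k))), ?_, fun x => ?_,
    fun y => ?_, mem_insert_self _ _, fun x hxi' hxF => ?_⟩
  · intro p hp
    simp only [mem_insert] at hp
    rcases hp with rfl | rfl | hp
    · exact mem_product.2 ⟨hiR, hjC⟩
    · exact mem_product.2 ⟨(mem_product.1 (hF hi')).1, (mem_product.1 (hF hik)).2⟩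
    · exact hF (mem_of_mem_erase (mem_of_mem_erase hp))
  · rw [rowSum, rowSum, erase_right_comm]
    exact card_filter_insert_insert_erase_erase hik hi' hi hi'k (by simp [hii'])
      (by simp [hii']) Iff.rfl Iff.rfl
  · exact card_filter_insert_insert_erase_erase hi' hik hi hi'k (by simp [hii'.symm])
      (by simp [hii']) Iff.rfl Iff.rfl
  · exact mem_insert_of_mem (mem_insert_of_mem (mem_erase.2 ⟨by simp [hkj.symm],
      mem_erase.2 ⟨by simp [hxi'], hxF⟩⟩))

lemma exists_mem_column_not_mem {G : Finset (ℤ × ℤ)} {S : Finset ℤ} {j : ℤ}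
    (hS : colSum G j = #S) {x : ℤ} (hx : x ∈ S) (hxG : (x, j) ∉ G) :
    ∃ i', (i', j) ∈ G ∧ i' ∉ S := by
  by_contra! h
  have hsub : G.filter (·.2 = j) ⊆ S ×ˢ {j} := by
    intro p hp
    obtain ⟨hpG, hpj⟩ := mem_filter.1 hp
    rw [← hpj] at h ⊢
    exact mem_product.2 ⟨h p.1 hpG, mem_singleton_self _⟩
  have := eq_of_subset_of_card_le hsub (by simpa [colSum] using hS.ge)
  exact hxG (mem_filter.1 (this ▸ mem_product.2 ⟨hx, mem_singleton_self j⟩)).1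

theorem exists_filter_snd_eq {R C : Finset ℤ} {F : Finset (ℤ × ℤ)} (hF : F ⊆ R ×ˢ C) {j : ℤ}
    (hjC : j ∈ C) {S : Finset ℤ} (hSR : S ⊆ R) (hS : colSum F j = #S)
    (htop : ∀ i ∈ S, ∀ i' ∈ R, i' ∉ S → rowSum F i' ≤ rowSum F i) :
    ∃ G ⊆ R ×ˢ C, (∀ x, rowSum G x = rowSum F x) ∧ (∀ y, colSum G y = colSum F y) ∧
      G.filter (·.2 = j) = S ×ˢ {j} := by
  classical
  set sameSums := (R ×ˢ C).powerset.filter fun G =>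
    (∀ x, rowSum G x = rowSum F x) ∧ ∀ y, colSum G y = colSum F y
  -- a rearrangement of `F` meeting `S × {j}` in as many points as possible
  obtain ⟨G, hG, hmax⟩ := sameSums.exists_max_image (fun G => #(S.filter fun i => (i, j) ∈ G))
    ⟨F, mem_filter.2 ⟨mem_powerset.2 hF, fun _ => rfl, fun _ => rfl⟩⟩
  obtain ⟨hGbox, hrow, hcol⟩ := mem_filter.1 hG
  rw [mem_powerset] at hGbox
  have hSG : S ×ˢ {j} ⊆ G.filter (·.2 = j) := by
    rintro ⟨x, y⟩ hp
    obtain ⟨hx, rfl⟩ : x ∈ S ∧ j = y := by simpa using hp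
    refine mem_filter.2 ⟨?_, rfl⟩
    by_contra hxG
    obtain ⟨i', hi'G, hi'S⟩ := exists_mem_column_not_mem ((hcol j).trans hS) hx hxG
    obtain ⟨G', hG'box, hrow', hcol', hxG', hkeep⟩ := exists_switch hGbox (hSR hx) hjC hxG hi'G
      (by rw [hrow, hrow]; exact htop _ hx i' (mem_product.1 (hGbox hi'G)).1 hi'S)
    have hG' : G' ∈ sameSums := mem_filter.2 ⟨mem_powerset.2 hG'box,
      fun x => (hrow' x).trans (hrow x), fun y => (hcol' y).trans (hcol y)⟩
    have hgrow : insert x (S.filter fun i => (i, j) ∈ G) ⊆ S.filter fun i => (i, j) ∈ G' := by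
      intro z hz
      rcases mem_insert.1 hz with rfl | hz
      · exact mem_filter.2 ⟨hx, hxG'⟩
      · obtain ⟨hzS, hzG⟩ := mem_filter.1 hz
        exact mem_filter.2 ⟨hzS, hkeep z (by rintro rfl; exact hi'S hzS) hzG⟩
    have := card_le_card hgrow
    rw [card_insert_of_notMem fun h : x ∈ S.filter _ => hxG (mem_filter.1 h).2] at this
    have := hmax G' hG'
    omega
  exact ⟨G, hGbox, hrow, hcol, (eq_of_subset_of_card_le hSG (by
    rw [card_product, card_singleton, mul_one, ← hS, ← hcol j]; exact le_rfl)).symm⟩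

lemma filter_snd_ne_subset {F : Finset (ℤ × ℤ)} {R : Finset ℤ} {j n : ℤ}
    (hF : F ⊆ R ×ˢ Icc j n) : F.filter (·.2 ≠ j) ⊆ R ×ˢ Icc (j + 1) n := by
  intro p hp
  obtain ⟨hpF, hpj⟩ := mem_filter.1 hp
  obtain ⟨hpR, hpC⟩ := mem_product.1 (hF hpF)
  rw [mem_Icc] at hpC
  exact mem_product.2 ⟨hpR, mem_Icc.2 ⟨by omega, hpC.2⟩⟩

lemma snd_ne_of_subset_product_Icc {H : Finset (ℤ × ℤ)} {R : Finset ℤ} {j a b : ℤ}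
    (hH : H ⊆ R ×ˢ Icc a b) (hja : j < a) : ∀ p ∈ H, p.2 ≠ j := fun p hp => by
  have := (mem_Icc.1 (mem_product.1 (hH hp)).2).1
  omega

lemma Lh_le_two_of_subset_column {m j : ℤ} {F : Finset (ℤ × ℤ)} (hF : F ⊆ Icc 1 m ×ˢ {j})
    (hρ : AntitoneOn (rowSum F) (Set.Icc 1 m)) : Lh F ≤ 2 := by
  set T := (Icc 1 m).filter fun x => (x, j) ∈ F
  have hFT : F = T ×ˢ {j} := by
    ext ⟨x, y⟩
    constructor
    · intro hp
      obtain ⟨hx, hy⟩ := mem_product.1 (hF hp)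
      rw [mem_singleton] at hy
      subst hy
      exact mem_product.2 ⟨mem_filter.2 ⟨hx, hp⟩, mem_singleton_self _⟩
    · intro hp
      obtain ⟨hx, hy⟩ := mem_product.1 hp
      rw [mem_singleton] at hy
      subst hy
      exact (mem_filter.1 hx).2
  have hT : T = Icc 1 (#T : ℤ) := by
    refine filter_Icc_eq_Icc_card fun x y hx hxy hy hyF => ?_
    have := hρ ⟨hx, hxy.trans hy⟩ ⟨hx.trans hxy, hy⟩ hxy
    rw [hFT, rowSum_product_singleton, rowSum_product_singleton,
      if_pos (mem_filter.2 ⟨mem_Icc.2 ⟨hx.trans hxy, hy⟩, hyF⟩)] at this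
    by_contra hxF
    rw [if_neg (show x ∉ T from fun h => hxF (mem_filter.1 h).2)] at this
    omega
  rw [hFT, hT]
  exact Lh_Icc_column_le _ _ _

lemma exists_first_column_two_intervals {m j₀ n : ℤ} {F : Finset (ℤ × ℤ)}
    (hF : F ⊆ Icc 1 m ×ˢ Icc j₀ n) (hj : j₀ ≤ n) (hρ : AntitoneOn (rowSum F) (Set.Icc 1 m)) :
    ∃ G ⊆ Icc 1 m ×ˢ Icc j₀ n, (∀ x, rowSum G x = rowSum F x) ∧
      (∀ y, colSum G y = colSum F y) ∧ ∃ a b b' : ℤ,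
        G.filter (·.2 = j₀) = (Icc 1 a ∪ Icc b b') ×ˢ {j₀} ∧
        AntitoneOn (rowSum (G.filter (·.2 ≠ j₀))) (Set.Icc 1 m) := by
  obtain ⟨a, b, b', hSm, hS, htop⟩ := exists_two_intervals_top_rows hρ (colSum_le_card hF j₀)
  obtain ⟨G, hGbox, hrow, hcol, hGj⟩ := exists_filter_snd_eq hF (mem_Icc.2 ⟨le_rfl, hj⟩) hSm
    hS.symm fun i hi i' hi' hi'S => (htop i hi i' hi' hi'S).1
  have hρG : rowSum G = rowSum F := funext hrow
  refine ⟨G, hGbox, hrow, hcol, a, b, b', hGj, ?_⟩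
  refine antitoneOn_of_add_indicator (hρG ▸ hρ) (rowSum_filter_snd_ne_add hGj) ?_
  intro x hx y hy hyS hxy
  rw [hρG]
  exact (htop x hx y (mem_Icc.2 hy) hyS).2 hxy

theorem exists_Lh_le (m : ℤ) (k : ℕ) :
    ∀ (j₀ : ℤ) (F : Finset (ℤ × ℤ)), F ⊆ Icc 1 m ×ˢ Icc j₀ (j₀ + k) →
      AntitoneOn (rowSum F) (Set.Icc 1 m) →
      ∃ G ⊆ Icc 1 m ×ˢ Icc j₀ (j₀ + k), (∀ x, rowSum G x = rowSum F x) ∧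
        (∀ y, colSum G y = colSum F y) ∧ Lh G ≤ 4 * k + 2 := by
  induction k with
  | zero =>
    intro j₀ F hF hρ
    refine ⟨F, hF, fun _ => rfl, fun _ => rfl, Lh_le_two_of_subset_column (j := j₀) ?_ hρ⟩
    simpa using hF
  | succ k ih =>
    intro j₀ F hF hρ
    have hbox : Icc j₀ (j₀ + ↑(k + 1)) = Icc j₀ (j₀ + 1 + k) := by push_cast; ring_nf
    rw [hbox] at hF ⊢
    obtain ⟨G, hGbox, hrow, hcol, a, b, b', hGj, hρ₀⟩ :=
      exists_first_column_two_intervals hF (by omega) hρ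
    obtain ⟨H, hHbox, hHrow, hHcol, hHLh⟩ := ih (j₀ + 1) _ (filter_snd_ne_subset hGbox) hρ₀
    obtain ⟨hrow', hcol', hLh⟩ := sums_Lh_union_column hGj
      (snd_ne_of_subset_product_Icc hHbox (lt_add_one j₀)) hHrow hHcol
    refine ⟨H ∪ (Icc 1 a ∪ Icc b b') ×ˢ {j₀}, union_subset ?_ ?_, fun x => ?_, fun y => ?_, ?_⟩
    · exact hHbox.trans (product_subset_product_right (Icc_subset_Icc (by omega) le_rfl))
    · rw [← hGj]
      exact (filter_subset _ _).trans hGbox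
    · exact (hrow' x).trans (hrow x)
    · exact (hcol' y).trans (hcol y)
    · have := Lh_Icc_union_Icc_column_le j₀ 1 a b b'
      omega

lemma antitoneOn_Icc_of_natCast_eq {ρ : ℤ → ℕ} {r : ℕ → ℕ} {m : ℕ}
    (hρ : ∀ i ∈ Finset.Icc 1 m, ρ i = r i)
    (hr : ∀ i i' : ℕ, 1 ≤ i → i ≤ i' → i' ≤ m → r i' ≤ r i) :
    AntitoneOn ρ (Set.Icc 1 (m : ℤ)) := by
  intro x hx y hy hxy
  lift x to ℕ using by linarith [hx.1]
  lift y to ℕ using by linarith [hy.1]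
  simp only [Set.mem_Icc, Nat.one_le_cast, Nat.cast_le] at hx hy hxy
  rw [hρ x (Finset.mem_Icc.2 hx), hρ y (Finset.mem_Icc.2 hy)]
  exact hr x y hx.1 hxy hy.2

theorem exists_small_horizontal_boundary_general (m n : ℕ) (r c : ℕ → ℕ)
    (hn : 2 ≤ n)
    (hr : ∀ i i' : ℕ, 1 ≤ i → i ≤ i' → i' ≤ m → r i' ≤ r i)
    (hc1 : c 1 = m)
    (hcons : ∃ F : Finset (ℤ × ℤ),
      F ⊆ Finset.Icc 1 (m : ℤ) ×ˢ Finset.Icc 1 (n : ℤ) ∧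
      (∀ i ∈ Finset.Icc 1 m, rowSum F i = r i) ∧
      (∀ j ∈ Finset.Icc 1 n, colSum F j = c j)) :
    ∃ F2 : Finset (ℤ × ℤ),
      F2 ⊆ Finset.Icc 1 (m : ℤ) ×ˢ Finset.Icc 1 (n : ℤ) ∧
      (∀ i ∈ Finset.Icc 1 m, rowSum F2 i = r i) ∧
      (∀ j ∈ Finset.Icc 1 n, colSum F2 j = c j) ∧
      Lh F2 ≤ 4 * n - 4 := by
  obtain ⟨F, hF, hrow, hcol⟩ := hcons
  have hρ := antitoneOn_Icc_of_natCast_eq hrow hr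
  have hfull : F.filter (·.2 = 1) = Icc 1 (m : ℤ) ×ˢ {1} :=
    filter_snd_eq_of_colSum_eq hF (by simpa [hc1] using hcol 1 (by simp; omega))
  have hbox : Icc (1 + 1 : ℤ) n = Icc 2 (2 + ((n - 2 : ℕ) : ℤ)) := by congr 1; omega
  obtain ⟨G, hGbox, hGrow, hGcol, hGLh⟩ := exists_Lh_le m (n - 2) 2 _
    (hbox ▸ filter_snd_ne_subset hF) (antitoneOn_of_add_indicator hρ
      (rowSum_filter_snd_ne_add hfull) fun _ _ y hy hyS _ => (hyS (mem_Icc.2 hy)).elim)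
  obtain ⟨hrow', hcol', hLh⟩ := sums_Lh_union_column hfull
    (snd_ne_of_subset_product_Icc hGbox one_lt_two) hGrow hGcol
  refine ⟨G ∪ Icc 1 (m : ℤ) ×ˢ {1}, union_subset ?_ ?_, fun i hi => (hrow' i).trans (hrow i hi),
    fun j hj => (hcol' j).trans (hcol j hj), ?_⟩
  · exact hGbox.trans (product_subset_product_right (Icc_subset_Icc (by omega) (by omega)))
  · rw [← hfull]
    exact (filter_subset _ _).trans hF
  · have := Lh_Icc_column_le 1 1 m
    omega

/-- For consistent monotone line sums with `n = r 1 ≥ 2` and `m = c 1`, there exists a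
set `F₂` with these line sums whose horizontal boundary has length at most `4n - 4`. -/
theorem exists_small_horizontal_boundary (m n : ℕ) (r c : ℕ → ℕ)
    (hm : 1 ≤ m) (hn : 2 ≤ n)
    (hr : ∀ i i' : ℕ, 1 ≤ i → i ≤ i' → i' ≤ m → r i' ≤ r i)
    (hc : ∀ j j' : ℕ, 1 ≤ j → j ≤ j' → j' ≤ n → c j' ≤ c j)
    (hr1 : r 1 = n) (hc1 : c 1 = m)
    (hcons : ∃ F : Finset (ℤ × ℤ),
      F ⊆ Finset.Icc 1 (m : ℤ) ×ˢ Finset.Icc 1 (n : ℤ) ∧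
      (∀ i ∈ Finset.Icc 1 m, rowSum F i = r i) ∧
      (∀ j ∈ Finset.Icc 1 n, colSum F j = c j)) :
    ∃ F2 : Finset (ℤ × ℤ),
      F2 ⊆ Finset.Icc 1 (m : ℤ) ×ˢ Finset.Icc 1 (n : ℤ) ∧
      (∀ i ∈ Finset.Icc 1 m, rowSum F2 i = r i) ∧
      (∀ j ∈ Finset.Icc 1 n, colSum F2 j = c j) ∧
      Lh F2 ≤ 4 * n - 4 :=
  exists_small_horizontal_boundary_general m n r c hn hr hc1 hcons
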